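/- Let A, A' be symmetric q×q matrices, and suppose for infinitely many (or at least two) matrices Fᵢ of size q×nᵢ with nᵢ > q we have Fᵢᵀ A Fᵢ + Γᵢ + σ²Iₙᵢ = Fᵢᵀ A' Fᵢ + Γᵢ + σ'²Iₙᵢ, where Γᵢ is any nᵢ×nᵢ matrix. If some Fᵢ has rank q, then σ² = σ'² and Fᵢᵀ A Fᵢ = Fᵢᵀ A' Fᵢ; moreover if Fᵢ has full row rank q then A = A'. -/
import Mathlib

open Matrix in

/-- Identifiability of the variance parameters: let `A, A'` be symmetric `q×q` matrices and
suppose for a matrix `F` of size `q×n` with `n > q` we have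
`Fᵀ A F + Γ + σ² Iₙ = Fᵀ A' F + Γ + σ'² Iₙ` where `Γ` is any `n×n` matrix.  If `F` has
rank `q` (full row rank), then `σ² = σ'²`, `Fᵀ A F = Fᵀ A' F`, and moreover `A = A'`. -/
theorem variance_parameters_identifiable (q n : ℕ) (hn : q < n)
    (A A' : Matrix (Fin q) (Fin q) ℝ) (hA : A.IsSymm) (hA' : A'.IsSymm)
    (F : Matrix (Fin q) (Fin n) ℝ) (Γ : Matrix (Fin n) (Fin n) ℝ) (σ2 σ2' : ℝ)
    (heq : F.transpose * A * F + Γ + σ2 • (1 : Matrix (Fin n) (Fin n) ℝ)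
         = F.transpose * A' * F + Γ + σ2' • (1 : Matrix (Fin n) (Fin n) ℝ))
    (hrank : F.rank = q) :
    σ2 = σ2' ∧ F.transpose * A * F = F.transpose * A' * F ∧ A = A' := by
  -- key equation
  have key : F.transpose * (A - A') * F = (σ2' - σ2) • (1 : Matrix (Fin n) (Fin n) ℝ) := by
    rw [Matrix.mul_sub, Matrix.sub_mul, sub_smul]
    ext i j
    have h := congr_fun (congr_fun heq i) j
    simp only [Matrix.add_apply, Matrix.sub_apply, Matrix.smul_apply, Matrix.one_apply,
      smul_eq_mul] at *
    linarith
  -- σ2 = σ2'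
  have hσ : σ2 = σ2' := by
    by_contra h
    have hne : σ2' - σ2 ≠ 0 := sub_ne_zero.mpr (Ne.symm h)
    have hunit : IsUnit ((σ2' - σ2) • (1 : Matrix (Fin n) (Fin n) ℝ)) := by
      rw [Matrix.isUnit_iff_isUnit_det]
      simp [Matrix.det_smul, hne]
    have hrk : ((σ2' - σ2) • (1 : Matrix (Fin n) (Fin n) ℝ)).rank = n := by
      simpa using Matrix.rank_of_isUnit _ hunit
    have hle : (F.transpose * (A - A') * F).rank ≤ q := by
      calc (F.transpose * (A - A') * F).rank ≤ F.rank := Matrix.rank_mul_le_right _ _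
        _ = q := hrank
    rw [key, hrk] at hle
    omega
  have hzero : F.transpose * (A - A') * F = 0 := by
    rw [key, hσ, sub_self, zero_smul]
  -- surjectivity of mulVec F
  have hsurj : Function.Surjective F.mulVec := by
    have : LinearMap.range F.mulVecLin = ⊤ := by
      apply Submodule.eq_top_of_finrank_eq
      rw [← Matrix.rank, hrank]
      simp
    intro u
    have := this ▸ Submodule.mem_top (x := u) (R := ℝ)
    obtain ⟨x, hx⟩ := this
    exact ⟨x, hx⟩
  have hAA : A = A' := by
    have hM : ∀ u v : Fin q → ℝ, u ⬝ᵥ (A - A').mulVec v = 0 := by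
      intro u v
      obtain ⟨x, hx⟩ := hsurj u
      obtain ⟨y, hy⟩ := hsurj v
      have h0 : x ⬝ᵥ (F.transpose * (A - A') * F).mulVec y = 0 := by
        rw [hzero]; simp
      rw [← Matrix.mulVec_mulVec, ← Matrix.mulVec_mulVec, Matrix.dotProduct_mulVec x,
        Matrix.vecMul_transpose, hx] at h0
      rw [hy] at h0
      exact h0
    have : A - A' = 0 := by
      ext i j
      have := hM (Pi.single i 1) (Pi.single j 1)
      simpa [Matrix.mulVec_single, dotProduct, Pi.single_apply, Finset.sum_ite_eq'] using this
    exact sub_eq_zero.mp this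
  refine ⟨hσ, ?_, hAA⟩
  rw [hAA]
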